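/- arXiv:1105.4954 — 4 statements merged into one kernel-verified Lean document; each statement's English description precedes it below -/
import Mathlib

section
/- Let d ≥ 1, λ ∈ ℝ, c ∈ ℝ^d, let σ be a positive integer, and let u₀ : ℝ^d → ℂ be differentiable. Define u(t,x) := u₀(x + t·c)·exp(−i·λ·t·|u₀(x + t·c)|^(2σ)). Then u(0,x) = u₀(x) for all x, and u satisfies i·∂_t u(t,x) − i·(c·∇_x u)(t,x) = λ·|u(t,x)|^(2σ)·u(t,x) for every (t,x), where c·∇_x u = Σ_{j=1}^d c_j ∂_{x_j} u. -/
/-! The operator `i∂ₜ - i c·∇` is `i` times the derivative in the direction `(1, -c)`, i.e. along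
the characteristics `s ↦ (s, x + (t - s) c)`. Along each of them `u` is the flow of the ODE
`i v' = λ |v|^(2σ) v` started at `u₀ (x + t c)`; this flow is explicit because it preserves `|v|`,
which turns the equation into the linear one `i v' = λ |v(0)|^(2σ) v`. -/

open Complex

theorem contDiff_norm_pow_two_mul {E : Type*} [NormedAddCommGroup E] [InnerProductSpace ℝ E]
    (σ : ℕ) {n : WithTop ℕ∞} : ContDiff ℝ n fun x : E => ‖x‖ ^ (2 * σ) := by
  simp only [pow_mul]
  exact (contDiff_norm_sq ℝ).pow σ

noncomputable def nlsOdeFlow (lam : ℝ) (σ : ℕ) (z : ℂ) (t : ℝ) : ℂ :=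
  z * exp (-I * lam * t * ((‖z‖ ^ (2 * σ) : ℝ) : ℂ))

section NlsOdeFlow

variable (lam : ℝ) (σ : ℕ)

@[simp]
theorem nlsOdeFlow_zero (z : ℂ) : nlsOdeFlow lam σ z 0 = z := by
  simp [nlsOdeFlow]

@[simp]
theorem norm_nlsOdeFlow (z : ℂ) (t : ℝ) : ‖nlsOdeFlow lam σ z t‖ = ‖z‖ := by
  have : -I * lam * t * ((‖z‖ ^ (2 * σ) : ℝ) : ℂ) =
      ((-(lam * t * ‖z‖ ^ (2 * σ)) : ℝ) : ℂ) * I := by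
    push_cast; ring
  rw [nlsOdeFlow, norm_mul, this, norm_exp_ofReal_mul_I, mul_one]

theorem hasDerivAt_nlsOdeFlow (z : ℂ) (t : ℝ) :
    HasDerivAt (nlsOdeFlow lam σ z)
      (-I * lam * ((‖z‖ ^ (2 * σ) : ℝ) : ℂ) * nlsOdeFlow lam σ z t) t := by
  have := (((hasDerivAt_id (t : ℂ)).const_mul (-I * lam)).mul_const
    ((‖z‖ ^ (2 * σ) : ℝ) : ℂ)).cexp.const_mul z |>.comp_ofReal
  convert this using 1
  · rfl
  · simp only [nlsOdeFlow, id, mul_one]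
    ring

theorem I_mul_deriv_nlsOdeFlow (z : ℂ) (t : ℝ) :
    I * deriv (nlsOdeFlow lam σ z) t =
      lam * ((‖nlsOdeFlow lam σ z t‖ ^ (2 * σ) : ℝ) : ℂ) * nlsOdeFlow lam σ z t := by
  rw [(hasDerivAt_nlsOdeFlow lam σ z t).deriv, norm_nlsOdeFlow]
  ring_nf
  rw [I_sq]
  ring

theorem differentiable_nlsOdeFlow :
    Differentiable ℝ fun p : ℂ × ℝ => nlsOdeFlow lam σ p.1 p.2 := by
  have hnorm : Differentiable ℝ fun p : ℂ × ℝ => ‖p.1‖ ^ (2 * σ) :=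
    ((contDiff_norm_pow_two_mul (n := 1) σ).differentiable one_ne_zero).comp differentiable_fst
  unfold nlsOdeFlow
  fun_prop

end NlsOdeFlow

theorem sum_ofReal_mul_apply_single {ι : Type*} [Fintype ι] [DecidableEq ι]
    (L : EuclideanSpace ℝ ι →L[ℝ] ℂ) (c : EuclideanSpace ℝ ι) :
    ∑ j, (c j : ℂ) * L (EuclideanSpace.single j 1) = L c := by
  conv_rhs => rw [← (EuclideanSpace.basisFun ι ℝ).sum_repr c]
  simp [map_sum, Complex.real_smul]

theorem fderiv_apply_one_neg_eq_deriv {E F : Type*} [NormedAddCommGroup E] [NormedSpace ℝ E]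
    [NormedAddCommGroup F] [NormedSpace ℝ F] {u : ℝ × E → F} {v : ℝ → F} {t : ℝ} {x c : E}
    (hu : DifferentiableAt ℝ u (t, x)) (hchar : ∀ s, u (s, x + (t - s) • c) = v s) :
    fderiv ℝ u (t, x) (1, -c) = deriv v t := by
  rw [← hu.lineDeriv_eq_fderiv, lineDeriv]
  have : (fun s : ℝ => u ((t, x) + s • (1, -c))) = fun s => v (t + s) := by
    funext s
    rw [← hchar]
    congr 1
    simp [sub_eq_add_neg]
  rw [this, deriv_comp_const_add, add_zero]

theorem transport_explicit_solution_general (d : ℕ) (lam : ℝ) (σ : ℕ)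
    (c : EuclideanSpace ℝ (Fin d))
    (u₀ : EuclideanSpace ℝ (Fin d) → ℂ) (hu₀ : Differentiable ℝ u₀)
    (u : ℝ × EuclideanSpace ℝ (Fin d) → ℂ)
    (hu : ∀ p : ℝ × EuclideanSpace ℝ (Fin d),
      u p = u₀ (p.2 + p.1 • c) *
        Complex.exp (-Complex.I * (lam : ℂ) * (p.1 : ℂ)
          * ((‖u₀ (p.2 + p.1 • c)‖ ^ (2 * σ) : ℝ) : ℂ))) :
    (∀ x : EuclideanSpace ℝ (Fin d), u (0, x) = u₀ x) ∧
    ∀ (t : ℝ) (x : EuclideanSpace ℝ (Fin d)),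
      Complex.I * fderiv ℝ u (t, x) ((1 : ℝ), (0 : EuclideanSpace ℝ (Fin d)))
        - Complex.I * ∑ j : Fin d, (c j : ℂ) *
            fderiv ℝ u (t, x) ((0 : ℝ), EuclideanSpace.single j (1 : ℝ))
        = (lam : ℂ) * ((‖u (t, x)‖ ^ (2 * σ) : ℝ) : ℂ) * u (t, x) := by
  have hu' : u = fun p => nlsOdeFlow lam σ (u₀ (p.2 + p.1 • c)) p.1 := funext hu
  refine ⟨fun x => by simp [hu'], fun t x => ?_⟩
  have hdiff : DifferentiableAt ℝ u (t, x) := by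
    rw [hu']
    have hdata : Differentiable ℝ fun p : ℝ × EuclideanSpace ℝ (Fin d) => u₀ (p.2 + p.1 • c) :=
      hu₀.comp (by fun_prop)
    exact (differentiable_nlsOdeFlow lam σ).comp (hdata.prodMk differentiable_fst) _
  have hchar : ∀ s, u (s, x + (t - s) • c) = nlsOdeFlow lam σ (u₀ (x + t • c)) s := by
    intro s
    simp only [hu']
    rw [add_assoc, ← add_smul, sub_add_cancel]
  have hsum := sum_ofReal_mul_apply_single ((fderiv ℝ u (t, x)).comp (.inr ℝ ℝ _)) c
  simp only [ContinuousLinearMap.comp_apply, ContinuousLinearMap.inr_apply] at hsum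
  rw [hsum, ← mul_sub, ← map_sub, Prod.mk_sub_mk, sub_zero, zero_sub,
    fderiv_apply_one_neg_eq_deriv hdiff hchar, I_mul_deriv_nlsOdeFlow, ← hchar t, sub_self,
    zero_smul, add_zero]

theorem transport_explicit_solution (d : ℕ) (hd : 1 ≤ d) (lam : ℝ) (σ : ℕ) (hσ : 1 ≤ σ)
    (c : EuclideanSpace ℝ (Fin d))
    (u₀ : EuclideanSpace ℝ (Fin d) → ℂ) (hu₀ : Differentiable ℝ u₀)
    (u : ℝ × EuclideanSpace ℝ (Fin d) → ℂ)
    (hu : ∀ p : ℝ × EuclideanSpace ℝ (Fin d),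
      u p = u₀ (p.2 + p.1 • c) *
        Complex.exp (-Complex.I * (lam : ℂ) * (p.1 : ℂ)
          * ((‖u₀ (p.2 + p.1 • c)‖ ^ (2 * σ) : ℝ) : ℂ))) :
    (∀ x : EuclideanSpace ℝ (Fin d), u (0, x) = u₀ x) ∧
    ∀ (t : ℝ) (x : EuclideanSpace ℝ (Fin d)),
      Complex.I * fderiv ℝ u (t, x) ((1 : ℝ), (0 : EuclideanSpace ℝ (Fin d)))
        - Complex.I * ∑ j : Fin d, (c j : ℂ) *
            fderiv ℝ u (t, x) ((0 : ℝ), EuclideanSpace.single j (1 : ℝ))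
        = (lam : ℂ) * ((‖u (t, x)‖ ^ (2 * σ) : ℝ) : ℂ) * u (t, x) :=
  transport_explicit_solution_general d lam σ c u₀ hu₀ u hu
end

section
/- Let α ∈ ℝ, α ≠ 0, and let k ≥ 1 be an integer. Then the k-th derivative of f(r) = (log(1/r))^α on (0,1) satisfies f^{(k)}(r)·r^k·(log(1/r))^{1−α} → (−1)^k·(k−1)!·α as r → 0⁺; that is, f^{(k)}(r) is asymptotically equivalent to (−1)^k·(k−1)!·α·r^{−k}·(log(1/r))^{α−1} as r → 0⁺. -/
/-!
Write `L(r) = log (1/r)`, so that `L' = -1/r`. Differentiating a function of the form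
`r ↦ L(r)^β · p(1/L(r)) / r^n`, with `p` a polynomial, gives a function of the same form with
`n + 1` in place of `n` and `X² p' - (β X + n) p` in place of `p`; in particular the constant term of
`p` gets multiplied by `-n`. Starting from `f' = L^(α-1) · (-α) / r`, the `k`-th derivative of
`f = L^α` is `L^(α-1) · p_k(1/L) / r^k` with `p_k(0) = (-1)^k (k-1)! α`, and since `1/L(r) → 0` as
`r → 0⁺`, the normalised derivative `f^(k)(r) r^k L(r)^(1-α) = p_k(1/L(r))` tends to `p_k(0)`.
-/

open Real Filter Set Polynomial Topology

namespace LogProfile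

lemma log_one_div_pos {r : ℝ} (hr : r ∈ Ioo (0 : ℝ) 1) : 0 < log (1 / r) := by
  rw [one_div, log_inv, neg_pos]
  exact log_neg hr.1 hr.2

lemma hasDerivAt_log_one_div {r : ℝ} (hr : r ≠ 0) :
    HasDerivAt (fun s : ℝ => log (1 / s)) (-r⁻¹) r := by
  simpa only [one_div, log_inv] using (hasDerivAt_log hr).fun_neg

lemma tendsto_log_one_div_nhdsGT_zero :
    Tendsto (fun r : ℝ => log (1 / r)) (𝓝[>] 0) atTop := by
  simp only [one_div, log_inv]
  exact tendsto_neg_atBot_atTop.comp tendsto_log_nhdsGT_zero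

noncomputable def profile (β : ℝ) (n : ℕ) (p : ℝ[X]) (r : ℝ) : ℝ :=
  log (1 / r) ^ β * p.eval (log (1 / r))⁻¹ / r ^ n

noncomputable def derivPoly (β : ℝ) (n : ℕ) (p : ℝ[X]) : ℝ[X] :=
  X ^ 2 * derivative p - (C β * X + C (n : ℝ)) * p

lemma eval_zero_derivPoly (β : ℝ) (n : ℕ) (p : ℝ[X]) :
    (derivPoly β n p).eval 0 = -n * p.eval 0 := by
  simp [derivPoly]

lemma hasDerivAt_profile (β : ℝ) (n : ℕ) (p : ℝ[X]) {r : ℝ} (hr : r ≠ 0)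
    (hL : log (1 / r) ≠ 0) :
    HasDerivAt (profile β n p) (profile β (n + 1) (derivPoly β n p) r) r := by
  have hlog := hasDerivAt_log_one_div hr
  have hpow := hlog.rpow_const (p := β) (Or.inl hL)
  have hpoly := (p.hasDerivAt _).comp r (hlog.fun_inv hL)
  have hn : (n : ℝ) * r ^ (n - 1) = n * r ^ n / r := by
    rcases n with _ | n
    · simp
    · rw [Nat.add_sub_cancel, pow_succ, mul_div_assoc, mul_div_cancel_right₀ _ hr]
  refine ((hpow.fun_mul hpoly).fun_div (hasDerivAt_pow n r) (pow_ne_zero n hr)).congr_deriv ?_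
  simp only [profile, derivPoly, eval_sub, eval_mul, eval_pow, eval_X, eval_add, eval_C,
    Function.comp_apply, rpow_sub_one hL, hn]
  field_simp
  ring

noncomputable def iteratedDerivPoly (α : ℝ) : ℕ → ℝ[X]
  | 0 => C (-α)
  | n + 1 => derivPoly (α - 1) (n + 1) (iteratedDerivPoly α n)

lemma eval_zero_iteratedDerivPoly (α : ℝ) (n : ℕ) :
    (iteratedDerivPoly α n).eval 0 = (-1) ^ (n + 1) * n.factorial * α := by
  induction n with
  | zero => simp [iteratedDerivPoly]
  | succ n ih =>
    rw [iteratedDerivPoly, eval_zero_derivPoly, ih, Nat.factorial_succ]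
    push_cast
    ring

lemma iteratedDeriv_log_one_div_rpow_eqOn (α : ℝ) (n : ℕ) :
    EqOn (iteratedDeriv (n + 1) fun s : ℝ => log (1 / s) ^ α)
      (profile (α - 1) (n + 1) (iteratedDerivPoly α n)) (Ioo 0 1) := by
  induction n with
  | zero =>
    intro r hr
    rw [iteratedDeriv_one, ((hasDerivAt_log_one_div hr.1.ne').rpow_const
      (Or.inl (log_one_div_pos hr).ne')).deriv]
    simp only [profile, iteratedDerivPoly, eval_C]
    ring
  | succ n ih =>
    intro r hr
    rw [iteratedDeriv_succ, (ih.eventuallyEq_of_mem (isOpen_Ioo.mem_nhds hr)).deriv_eq,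
      (hasDerivAt_profile _ _ _ hr.1.ne' (log_one_div_pos hr).ne').deriv]
    rfl

lemma tendsto_profile_mul_pow_mul_rpow_neg (β : ℝ) (n : ℕ) (p : ℝ[X]) :
    Tendsto (fun r => profile β n p r * r ^ n * log (1 / r) ^ (-β)) (𝓝[>] 0)
      (𝓝 (p.eval 0)) := by
  have hinv : Tendsto (fun r : ℝ => (log (1 / r))⁻¹) (𝓝[>] 0) (𝓝 0) :=
    tendsto_inv_atTop_zero.comp tendsto_log_one_div_nhdsGT_zero
  refine ((p.continuous.tendsto 0).comp hinv).congr' ?_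
  filter_upwards [Ioo_mem_nhdsGT one_pos] with r hr
  have hL := log_one_div_pos hr
  have hr0 : r ^ n ≠ 0 := pow_ne_zero n hr.1.ne'
  have hLβ : log (1 / r) ^ β ≠ 0 := (rpow_pos_of_pos hL β).ne'
  simp only [Function.comp_apply, profile, rpow_neg hL.le]
  field_simp

end LogProfile

open LogProfile

theorem iterated_deriv_log_profile_asymptotics_general (α : ℝ) (k : ℕ) (hk : 1 ≤ k) :
    Filter.Tendsto
      (fun r : ℝ => iteratedDeriv k (fun s : ℝ => Real.log (1 / s) ^ α) r
        * r ^ k * Real.log (1 / r) ^ (1 - α))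
      (nhdsWithin 0 (Set.Ioi 0))
      (nhds ((-1) ^ k * ((k - 1).factorial : ℝ) * α)) := by
  obtain ⟨n, rfl⟩ : ∃ n, k = n + 1 := ⟨k - 1, by omega⟩
  have h := tendsto_profile_mul_pow_mul_rpow_neg (α - 1) (n + 1) (iteratedDerivPoly α n)
  rw [eval_zero_iteratedDerivPoly, neg_sub] at h
  rw [Nat.add_sub_cancel]
  refine h.congr' ?_
  filter_upwards [Ioo_mem_nhdsGT one_pos] with r hr
  rw [iteratedDeriv_log_one_div_rpow_eqOn α n hr]

theorem iterated_deriv_log_profile_asymptotics (α : ℝ) (hα : α ≠ 0) (k : ℕ) (hk : 1 ≤ k) :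
    Filter.Tendsto
      (fun r : ℝ => iteratedDeriv k (fun s : ℝ => Real.log (1 / s) ^ α) r
        * r ^ k * Real.log (1 / r) ^ (1 - α))
      (nhdsWithin 0 (Set.Ioi 0))
      (nhds ((-1) ^ k * ((k - 1).factorial : ℝ) * α)) :=
  iterated_deriv_log_profile_asymptotics_general α k hk
end

section
/- Let σ > 0, 0 < α < 1/2, λ ∈ ℝ with λ ≠ 0, t > 0, and let k ≥ 1 be an integer. Define g : (0, 1/2) → ℂ by g(r) = (log(1/r))^α·exp(−i·λ·t·(log(1/r))^{2σα}), and set γ_k := max((2σk+1)·α − k, (2σ+1)·α − 1). Then there exist constants c > 0 and ω > 0 such that, as r → 0⁺, the difference |g^{(k)}(r)| − c·r^{−k}·(log(1/r))^{γ_k} is O(r^{−k}·(log(1/r))^{γ_k − ω}). -/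
/-!
Put `μ = 2σα`, `c = -iλt` and `u = log log (1/r)`, so that `(log (1/r))^a = e^{a u}` and
`d/dr = -r⁻¹ e^{-u} d/du`. By induction, `g^{(k)}(r) = r^{-k} e^{c (log 1/r)^μ} P_k(u)`, where
`P_0 = e^{α u}` and `P_{k+1} = -k P_k - cμ e^{(μ-1)u} P_k - e^{-u} P_k'`. The phase factor has
modulus one, so `|g^{(k)}(r)| = r^{-k} |P_k(u)|`. Each `P_k` is an exponential polynomial in `u`.
Differentiating one never raises its frequencies, so only the first two terms of the recursion can
raise the top frequency. For `μ < 1` the top term of `P_{k+1}` comes from `-k P_k`, for `μ > 1` it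
comes from the phase term, and for `μ = 1` the two combine with coefficient `-k - cμ`, which is not
zero because `cμ` is purely imaginary and nonzero. Every other frequency lies a fixed amount below
`γ_k = α + max (k(μ-1)) (μ-1)`.
-/

open Asymptotics Filter Set Topology

namespace RadialProfile

noncomputable section

/-- `u ↦ e^{a u}`; at `u = log log (1/r)` this is `(log (1/r))^a`. -/
def expMonomial (a u : ℝ) : ℂ := (Real.exp (a * u) : ℂ)

def expPoly (b : ℝ) : Submodule ℂ (ℝ → ℂ) := Submodule.span ℂ (expMonomial '' Iic b)

lemma expMonomial_add (a b : ℝ) : expMonomial (a + b) = expMonomial a * expMonomial b := by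
  ext u
  simp [expMonomial, add_mul, Real.exp_add]

lemma norm_expMonomial (a u : ℝ) : ‖expMonomial a u‖ = Real.exp (a * u) := by
  rw [expMonomial, Complex.norm_real, Real.norm_of_nonneg (Real.exp_pos _).le]

lemma hasDerivAt_expMonomial (a u : ℝ) :
    HasDerivAt (expMonomial a) (a * expMonomial a u) u :=
  (((hasDerivAt_id u).const_mul a).exp.ofReal_comp).congr_deriv (by simp [expMonomial, mul_comm])

lemma expMonomial_mem_expPoly {a b : ℝ} (h : a ≤ b) : expMonomial a ∈ expPoly b :=
  Submodule.subset_span ⟨a, h, rfl⟩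

lemma expPoly_mono {b b' : ℝ} (h : b ≤ b') : expPoly b ≤ expPoly b' :=
  Submodule.span_mono (image_mono (Iic_subset_Iic.2 h))

variable {f : ℝ → ℂ} {b : ℝ}

lemma expMonomial_mul_mem_expPoly (a : ℝ) (hf : f ∈ expPoly b) :
    expMonomial a * f ∈ expPoly (b + a) := by
  induction hf using Submodule.span_induction with
  | mem g hg =>
    obtain ⟨e, he, rfl⟩ := hg
    rw [← expMonomial_add]
    exact expMonomial_mem_expPoly (by linarith [mem_Iic.1 he])
  | zero => simp
  | add g h _ _ hg hh => rw [mul_add]; exact add_mem hg hh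
  | smul c g _ hg => rw [mul_smul_comm]; exact Submodule.smul_mem _ c hg

lemma differentiable_of_mem_expPoly (hf : f ∈ expPoly b) : Differentiable ℝ f := by
  induction hf using Submodule.span_induction with
  | mem g hg =>
    obtain ⟨e, -, rfl⟩ := hg
    exact fun u => (hasDerivAt_expMonomial e u).differentiableAt
  | zero => exact differentiable_const 0
  | add g h _ _ hg hh => exact hg.add hh
  | smul c g _ hg => exact hg.const_smul c

lemma deriv_mem_expPoly (hf : f ∈ expPoly b) : deriv f ∈ expPoly b := by
  induction hf using Submodule.span_induction with
  | mem g hg =>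
    obtain ⟨e, he, rfl⟩ := hg
    have : deriv (expMonomial e) = (e : ℂ) • expMonomial e :=
      funext fun u => (hasDerivAt_expMonomial e u).deriv
    rw [this]
    exact Submodule.smul_mem _ _ (expMonomial_mem_expPoly he)
  | zero => simp
  | add g h hg hh hg' hh' =>
    have : deriv (g + h) = deriv g + deriv h := funext fun u =>
      deriv_add (differentiable_of_mem_expPoly hg u) (differentiable_of_mem_expPoly hh u)
    rw [this]
    exact add_mem hg' hh'
  | smul c g _ hg =>
    rw [show deriv (c • g) = c • deriv g from funext fun _ => deriv_const_smul_field c g]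
    exact Submodule.smul_mem _ c hg

lemma isBigO_of_mem_expPoly (hf : f ∈ expPoly b) :
    f =O[atTop] fun u => Real.exp (b * u) := by
  induction hf using Submodule.span_induction with
  | mem g hg =>
    obtain ⟨e, he, rfl⟩ := hg
    refine IsBigO.of_bound 1 ?_
    filter_upwards [eventually_ge_atTop 0] with u hu
    rw [norm_expMonomial, Real.norm_of_nonneg (Real.exp_pos _).le, one_mul]
    exact Real.exp_le_exp.2 (mul_le_mul_of_nonneg_right he hu)
  | zero => exact isBigO_zero _ _
  | add g h _ _ hg hh => exact hg.add hh
  | smul c g _ hg => exact hg.const_smul_left c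

/-- `f = c e^{γ u} + O(e^{(γ - ω) u})` for some `ω > 0`, with a remainder that is again an
exponential polynomial, so that the expansion survives differentiation. -/
def HasLeadingTerm (f : ℝ → ℂ) (c : ℂ) (γ : ℝ) : Prop :=
  ∃ ω > 0, f - c • expMonomial γ ∈ expPoly (γ - ω)

lemma hasLeadingTerm_expMonomial (γ : ℝ) : HasLeadingTerm (expMonomial γ) 1 γ :=
  ⟨1, one_pos, by simp⟩

namespace HasLeadingTerm

variable {g : ℝ → ℂ} {c d : ℂ} {γ : ℝ}

lemma mem_expPoly (h : HasLeadingTerm f c γ) : f ∈ expPoly γ := by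
  obtain ⟨ω, hω, h⟩ := h
  simpa using add_mem (expPoly_mono (b' := γ) (by linarith) h)
    (Submodule.smul_mem _ c (expMonomial_mem_expPoly le_rfl))

lemma add_of_mem (hf : HasLeadingTerm f c γ) (hg : g ∈ expPoly b) (hb : b < γ) :
    HasLeadingTerm (f + g) c γ := by
  obtain ⟨ω, hω, hf⟩ := hf
  refine ⟨min ω (γ - b), lt_min hω (by linarith), ?_⟩
  rw [add_sub_right_comm]
  exact add_mem (expPoly_mono (by linarith [min_le_left ω (γ - b)]) hf)
    (expPoly_mono (by linarith [min_le_right ω (γ - b)]) hg)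

lemma add (hf : HasLeadingTerm f c γ) (hg : HasLeadingTerm g d γ) :
    HasLeadingTerm (f + g) (c + d) γ := by
  obtain ⟨ω, hω, hf⟩ := hf
  obtain ⟨ω', hω', hg⟩ := hg
  refine ⟨min ω ω', lt_min hω hω', ?_⟩
  rw [add_smul, add_sub_add_comm]
  exact add_mem (expPoly_mono (by linarith [min_le_left ω ω']) hf)
    (expPoly_mono (by linarith [min_le_right ω ω']) hg)

lemma smul (h : HasLeadingTerm f c γ) (a : ℂ) : HasLeadingTerm (a • f) (a * c) γ := by
  obtain ⟨ω, hω, h⟩ := h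
  refine ⟨ω, hω, ?_⟩
  rw [mul_smul, ← smul_sub]
  exact Submodule.smul_mem _ a h

lemma expMonomial_mul (h : HasLeadingTerm f c γ) (δ : ℝ) :
    HasLeadingTerm (expMonomial δ * f) c (γ + δ) := by
  obtain ⟨ω, hω, h⟩ := h
  refine ⟨ω, hω, ?_⟩
  have := expMonomial_mul_mem_expPoly δ h
  rwa [mul_sub, mul_smul_comm, ← expMonomial_add, add_comm δ, sub_add_eq_add_sub] at this

lemma isBigO_norm_sub (h : HasLeadingTerm f c γ) :
    ∃ ω > 0, (fun u => ‖f u‖ - ‖c‖ * Real.exp (γ * u)) =O[atTop]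
      fun u => Real.exp ((γ - ω) * u) := by
  obtain ⟨ω, hω, h⟩ := h
  refine ⟨ω, hω, IsBigO.trans ?_ (isBigO_of_mem_expPoly h)⟩
  refine IsBigO.of_bound 1 (Eventually.of_forall fun u => ?_)
  have := abs_norm_sub_norm_le (f u) (c * expMonomial γ u)
  rw [norm_mul, norm_expMonomial] at this
  simpa [Real.norm_eq_abs] using this

end HasLeadingTerm

/-- With `ℓ r = log log (1/r)` and `E = phaseFactor c μ`, the `r`-derivative of
`r^p E(ℓ r) P(ℓ r)` is `r^{p-1} E(ℓ r) (radialDerivStep (-(c μ)) μ p P)(ℓ r)`. -/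
def radialDerivStep (a : ℂ) (μ p : ℝ) (P : ℝ → ℂ) : ℝ → ℂ :=
  (p : ℂ) • P + a • (expMonomial (μ - 1) * P) - expMonomial (-1) * deriv P

variable {P : ℝ → ℂ} {a c : ℂ} {μ p γ : ℝ}

lemma radialDerivStep_mem_expPoly (hP : P ∈ expPoly b) :
    radialDerivStep a μ p P ∈ expPoly (b + max 0 (μ - 1)) := by
  have hle := le_max_left 0 (μ - 1)
  refine sub_mem (add_mem ?_ ?_) ?_
  · exact Submodule.smul_mem _ _ (expPoly_mono (by linarith) hP)
  · exact Submodule.smul_mem _ _ (expPoly_mono (by linarith [le_max_right 0 (μ - 1)])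
      (expMonomial_mul_mem_expPoly _ hP))
  · exact expPoly_mono (by linarith) (expMonomial_mul_mem_expPoly _ (deriv_mem_expPoly hP))

lemma neg_expMonomial_mul_deriv_mem_expPoly (h : HasLeadingTerm P c γ) :
    -(expMonomial (-1) * deriv P) ∈ expPoly (γ + -1) :=
  neg_mem (expMonomial_mul_mem_expPoly _ (deriv_mem_expPoly h.mem_expPoly))

lemma HasLeadingTerm.radialDerivStep_zero (h : HasLeadingTerm P c γ) (hμ : 0 < μ) :
    HasLeadingTerm (radialDerivStep a μ 0 P) (a * c) (γ + (μ - 1)) := by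
  have := ((h.expMonomial_mul (μ - 1)).smul a).add_of_mem (neg_expMonomial_mul_deriv_mem_expPoly h)
    (by linarith)
  rwa [RadialProfile.radialDerivStep, Complex.ofReal_zero, zero_smul, zero_add, sub_eq_add_neg]

lemma HasLeadingTerm.radialDerivStep (h : HasLeadingTerm P c γ) (hc : c ≠ 0) (ha : a.im ≠ 0)
    (hp : p ≠ 0) :
    ∃ c' ≠ 0, HasLeadingTerm (radialDerivStep a μ p P) c' (γ + max 0 (μ - 1)) := by
  have ha₀ : a ≠ 0 := fun h => ha (by simp [h])
  suffices ∃ c' ≠ 0, HasLeadingTerm ((p : ℂ) • P + a • (expMonomial (μ - 1) * P)) c'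
      (γ + max 0 (μ - 1)) by
    obtain ⟨c', hc', h'⟩ := this
    refine ⟨c', hc', ?_⟩
    rw [RadialProfile.radialDerivStep, sub_eq_add_neg]
    exact h'.add_of_mem (neg_expMonomial_mul_deriv_mem_expPoly h)
      (by linarith [le_max_left 0 (μ - 1)])
  have hpP := h.smul (p : ℂ)
  have haP := (h.expMonomial_mul (μ - 1)).smul a
  rcases lt_trichotomy μ 1 with hμ | rfl | hμ
  · rw [max_eq_left (by linarith), add_zero]
    exact ⟨_, mul_ne_zero (by exact_mod_cast hp) hc, hpP.add_of_mem haP.mem_expPoly (by linarith)⟩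
  · have hpa : (p : ℂ) + a ≠ 0 := fun h => ha (by simpa using congrArg Complex.im h)
    rw [sub_self, max_self, add_zero] at *
    exact ⟨_, by rw [← add_mul]; exact mul_ne_zero hpa hc, hpP.add haP⟩
  · rw [max_eq_right (by linarith), add_comm]
    exact ⟨_, mul_ne_zero ha₀ hc, haP.add_of_mem hpP.mem_expPoly (by linarith)⟩

def derivProfile (a : ℂ) (α μ : ℝ) : ℕ → ℝ → ℂ
  | 0 => expMonomial α
  | k + 1 => radialDerivStep a μ (-k) (derivProfile a α μ k)

lemma derivProfile_mem_expPoly (α : ℝ) (k : ℕ) :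
    derivProfile a α μ k ∈ expPoly (α + k * max 0 (μ - 1)) := by
  induction k with
  | zero => exact expMonomial_mem_expPoly (by simp)
  | succ k ih =>
    rw [derivProfile]
    convert radialDerivStep_mem_expPoly ih using 2
    push_cast
    ring

lemma hasLeadingTerm_derivProfile (α : ℝ) (hμ : 0 < μ) (ha : a.im ≠ 0) {k : ℕ} (hk : 1 ≤ k) :
    ∃ c ≠ 0, HasLeadingTerm (derivProfile a α μ k) c (α + max (k * (μ - 1)) (μ - 1)) := by
  induction k, hk using Nat.le_induction with
  | base =>
    have ha₀ : a ≠ 0 := fun h => ha (by simp [h])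
    refine ⟨a * 1, by simpa using ha₀, ?_⟩
    have := (hasLeadingTerm_expMonomial α).radialDerivStep_zero (a := a) hμ
    simpa [derivProfile] using this
  | succ k hk ih =>
    obtain ⟨c, hc, h⟩ := ih
    obtain ⟨c', hc', h'⟩ := h.radialDerivStep (μ := μ) hc ha (p := -k)
      (neg_ne_zero.2 (by positivity))
    refine ⟨c', hc', ?_⟩
    rw [derivProfile]
    convert h' using 1
    have hk' : (1 : ℝ) ≤ k := by exact_mod_cast hk
    push_cast
    rcases le_total μ 1 with hμ1 | hμ1
    · rw [max_eq_right (by nlinarith), max_eq_right (by nlinarith), max_eq_left (by linarith)]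
      ring
    · rw [max_eq_left (by nlinarith), max_eq_left (by nlinarith), max_eq_right (by linarith)]
      ring

lemma differentiable_derivProfile (α : ℝ) (k : ℕ) : Differentiable ℝ (derivProfile a α μ k) :=
  differentiable_of_mem_expPoly (derivProfile_mem_expPoly α k)

def logLogInv (r : ℝ) : ℝ := Real.log (Real.log (1 / r))

section logLogInv

variable {r : ℝ}

lemma log_one_div_pos (hr : r ∈ Ioo 0 1) : 0 < Real.log (1 / r) :=
  Real.log_pos (one_lt_one_div hr.1 hr.2)

lemma exp_mul_logLogInv (hr : r ∈ Ioo 0 1) (a : ℝ) :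
    Real.exp (a * logLogInv r) = Real.log (1 / r) ^ a := by
  rw [Real.rpow_def_of_pos (log_one_div_pos hr), mul_comm, logLogInv]

lemma hasDerivAt_logLogInv (hr : r ∈ Ioo 0 1) :
    HasDerivAt logLogInv (-r⁻¹ * Real.exp (-logLogInv r)) r := by
  have hL := log_one_div_pos hr
  have hinner : HasDerivAt (fun s => Real.log (1 / s)) (-r⁻¹) r := by
    have : (fun s : ℝ => Real.log (1 / s)) = fun s => -Real.log s :=
      funext fun s => by rw [one_div, Real.log_inv]
    rw [this]
    exact (Real.hasDerivAt_log hr.1.ne').neg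
  refine (hinner.log hL.ne').congr_deriv ?_
  rw [Real.exp_neg, logLogInv, Real.exp_log hL, div_eq_mul_inv]

lemma tendsto_logLogInv : Tendsto logLogInv (𝓝[>] 0) atTop := by
  have : Tendsto (fun r : ℝ => 1 / r) (𝓝[>] 0) atTop := by
    simpa [one_div] using tendsto_inv_nhdsGT_zero
  exact Real.tendsto_log_atTop.comp (Real.tendsto_log_atTop.comp this)

lemma hasDerivAt_rpow_mul_comp_logLogInv {Q : ℝ → ℂ} (p : ℝ) (hr : r ∈ Ioo 0 1)
    (hQ : DifferentiableAt ℝ Q (logLogInv r)) :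
    HasDerivAt (fun s => ((s ^ p : ℝ) : ℂ) * Q (logLogInv s))
      (((r ^ (p - 1) : ℝ) : ℂ) *
        (p * Q (logLogInv r) - expMonomial (-1) (logLogInv r) * deriv Q (logLogInv r))) r := by
  have hpow := (Real.hasDerivAt_rpow_const (p := p) (Or.inl hr.1.ne')).ofReal_comp
  have hQℓ := hQ.hasDerivAt.scomp r (hasDerivAt_logLogInv hr)
  refine (hpow.mul hQℓ).congr_deriv ?_
  rw [Real.rpow_sub_one hr.1.ne', expMonomial, neg_one_mul]
  simp only [Function.comp_apply, Complex.real_smul, Complex.ofReal_mul, Complex.ofReal_div,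
    Complex.ofReal_neg, Complex.ofReal_inv]
  ring

end logLogInv

def phaseFactor (c : ℂ) (μ u : ℝ) : ℂ := Complex.exp (c * expMonomial μ u)

lemma norm_phaseFactor (hc : c.re = 0) (μ u : ℝ) : ‖phaseFactor c μ u‖ = 1 := by
  rw [phaseFactor, Complex.norm_exp, Complex.mul_re, hc, expMonomial, Complex.ofReal_im]
  simp

lemma hasDerivAt_phaseFactor (c : ℂ) (μ u : ℝ) :
    HasDerivAt (phaseFactor c μ) (phaseFactor c μ u * (c * (μ * expMonomial μ u))) u :=
  ((hasDerivAt_expMonomial μ u).const_mul c).cexp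

lemma phaseFactor_mul_radialDerivStep (hP : DifferentiableAt ℝ P u) :
    (phaseFactor c μ * radialDerivStep (-(c * μ)) μ p P) u =
      p * (phaseFactor c μ * P) u - expMonomial (-1) u * deriv (phaseFactor c μ * P) u := by
  have hd : HasDerivAt (phaseFactor c μ * P) _ u :=
    (hasDerivAt_phaseFactor c μ u).mul hP.hasDerivAt
  rw [hd.deriv, RadialProfile.radialDerivStep]
  simp only [Pi.mul_apply, Pi.add_apply, Pi.sub_apply, Pi.smul_apply, smul_eq_mul]
  rw [sub_eq_add_neg μ 1, expMonomial_add, Pi.mul_apply]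
  ring

def radialProfile (c : ℂ) (α μ s : ℝ) : ℂ :=
  ((Real.log (1 / s) ^ α : ℝ) : ℂ) * Complex.exp (c * ((Real.log (1 / s) ^ μ : ℝ) : ℂ))

lemma iteratedDeriv_radialProfile (α : ℝ) (k : ℕ) {r : ℝ} (hr : r ∈ Ioo 0 1) :
    iteratedDeriv k (radialProfile c α μ) r =
      ((r ^ (-(k : ℝ)) : ℝ) : ℂ) *
        (phaseFactor c μ * derivProfile (-(c * μ)) α μ k) (logLogInv r) := by
  induction k generalizing r with
  | zero =>
    simp [radialProfile, phaseFactor, derivProfile, expMonomial, exp_mul_logLogInv hr, mul_comm]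
  | succ k ih =>
    have hev : iteratedDeriv k (radialProfile c α μ) =ᶠ[𝓝 r]
        fun s => ((s ^ (-(k : ℝ)) : ℝ) : ℂ) *
          (phaseFactor c μ * derivProfile (-(c * μ)) α μ k) (logLogInv s) :=
      eventually_of_mem (Ioo_mem_nhds hr.1 hr.2) fun s hs => ih hs
    have hQ : DifferentiableAt ℝ (phaseFactor c μ * derivProfile (-(c * μ)) α μ k)
        (logLogInv r) :=
      (hasDerivAt_phaseFactor c μ _).differentiableAt.mul (differentiable_derivProfile α k _)
    rw [iteratedDeriv_succ, hev.deriv_eq, (hasDerivAt_rpow_mul_comp_logLogInv _ hr hQ).deriv,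
      derivProfile, phaseFactor_mul_radialDerivStep (differentiable_derivProfile α k _)]
    push_cast
    ring_nf

lemma norm_iteratedDeriv_radialProfile (hc : c.re = 0) (α : ℝ) (k : ℕ) {r : ℝ}
    (hr : r ∈ Ioo 0 1) :
    ‖iteratedDeriv k (radialProfile c α μ) r‖ =
      r ^ (-(k : ℝ)) * ‖derivProfile (-(c * μ)) α μ k (logLogInv r)‖ := by
  rw [iteratedDeriv_radialProfile α k hr, Pi.mul_apply, norm_mul, norm_mul, norm_phaseFactor hc,
    one_mul, Complex.norm_real, Real.norm_of_nonneg (Real.rpow_nonneg hr.1.le _)]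

end

end RadialProfile

open RadialProfile

theorem radial_profile_asymptotics_general (σ α lam t : ℝ) (hσ : 0 < σ)
    (hα1 : 0 < α) (hlam : lam ≠ 0) (ht : 0 < t)
    (k : ℕ) (hk : 1 ≤ k) :
    ∃ c > (0 : ℝ), ∃ ω > (0 : ℝ),
      (fun r : ℝ =>
          ‖(iteratedDeriv k
            (fun s : ℝ => ((Real.log (1 / s) ^ α : ℝ) : ℂ) *
              Complex.exp (-Complex.I * (lam : ℂ) * (t : ℂ)
                * ((Real.log (1 / s) ^ (2 * σ * α) : ℝ) : ℂ))) r)‖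
          - c * r ^ (-(k : ℝ)) *
              Real.log (1 / r) ^ (max ((2 * σ * k + 1) * α - k) ((2 * σ + 1) * α - 1)))
        =O[nhdsWithin 0 (Set.Ioi 0)]
      (fun r : ℝ => r ^ (-(k : ℝ)) *
        Real.log (1 / r) ^ (max ((2 * σ * k + 1) * α - k) ((2 * σ + 1) * α - 1) - ω)) := by
  set c : ℂ := -Complex.I * lam * t
  set μ : ℝ := 2 * σ * α
  have hre : c.re = 0 := by simp [c]
  have him : (-(c * μ)).im ≠ 0 := by
    simpa [c] using mul_ne_zero (mul_ne_zero hlam ht.ne') (by positivity : μ ≠ 0)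
  obtain ⟨c₀, hc₀, hlead⟩ := hasLeadingTerm_derivProfile (μ := μ) α (by positivity) him hk
  obtain ⟨ω, hω, hO⟩ := hlead.isBigO_norm_sub
  refine ⟨‖c₀‖, norm_pos_iff.2 hc₀, ω, hω, ?_⟩
  have hγ : max ((2 * σ * k + 1) * α - k) ((2 * σ + 1) * α - 1) =
      α + max (k * (μ - 1)) (μ - 1) := by
    rw [← max_add_add_left]; congr 1 <;> ring
  rw [hγ]
  change (fun r => ‖iteratedDeriv k (radialProfile c α μ) r‖ - _) =O[_] _
  have hnear : Ioo (0 : ℝ) 1 ∈ 𝓝[>] 0 := Ioo_mem_nhdsGT one_pos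
  refine ((isBigO_refl (fun r : ℝ => r ^ (-(k : ℝ))) _).mul
    (hO.comp_tendsto tendsto_logLogInv)).congr' ?_ ?_
  · filter_upwards [hnear] with r hr
    rw [Function.comp_apply, norm_iteratedDeriv_radialProfile hre α k hr, exp_mul_logLogInv hr]
    ring
  · filter_upwards [hnear] with r hr
    rw [Function.comp_apply, exp_mul_logLogInv hr]

theorem radial_profile_asymptotics (σ α lam t : ℝ) (hσ : 0 < σ)
    (hα1 : 0 < α) (hα2 : α < 1/2) (hlam : lam ≠ 0) (ht : 0 < t)
    (k : ℕ) (hk : 1 ≤ k) :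
    ∃ c > (0 : ℝ), ∃ ω > (0 : ℝ),
      (fun r : ℝ =>
          ‖(iteratedDeriv k
            (fun s : ℝ => ((Real.log (1 / s) ^ α : ℝ) : ℂ) *
              Complex.exp (-Complex.I * (lam : ℂ) * (t : ℂ)
                * ((Real.log (1 / s) ^ (2 * σ * α) : ℝ) : ℂ))) r)‖
          - c * r ^ (-(k : ℝ)) *
              Real.log (1 / r) ^ (max ((2 * σ * k + 1) * α - k) ((2 * σ + 1) * α - 1)))
        =O[nhdsWithin 0 (Set.Ioi 0)]
      (fun r : ℝ => r ^ (-(k : ℝ)) *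
        Real.log (1 / r) ^ (max ((2 * σ * k + 1) * α - k) ((2 * σ + 1) * α - 1) - ω)) :=
  radial_profile_asymptotics_general σ α lam t hσ hα1 hlam ht k hk
end

section
/- Let d ≥ 1, σ > 0, λ ∈ ℝ with λ ≠ 0, and let s ≥ 1 be an integer. Define a₀ : ℝ^d → ℝ by a₀(y) = exp(−‖y‖²), and for κ ∈ (0,1], ε > 0, τ ≥ 0 define φ_τ : ℝ^d → ℂ by φ_τ(y) = κ·a₀(y)·exp(−i·λ·(τ/ε)·κ^{2σ}·a₀(y)^{2σ}). Then there exist constants c > 0 and C > 0, depending only on d, σ, λ, s, such that for all κ ∈ (0,1], ε > 0, τ ≥ 0: (∫_{ℝ^d} ‖D^s φ_τ(y)‖² dy)^{1/2} ≥ c·κ^{1+2σs}·(τ/ε)^s − C·κ, where D^s φ_τ(y) denotes the s-th iterated Fréchet derivative of φ_τ at y and ‖·‖ its operator norm. -/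
/-!
Write `φ_τ(y) = κ P_B(‖y‖²)` with `P_B(u) = e^{-u} exp(-iB e^{-2σu})` and `B = λ (τ/ε) κ^{2σ}`.
Along a ray, `(d/dr)^s P_B(r²) = exp(-iBw) ∑_{k ≤ s} (-iB)^k a_{s,k}(r)`, where `w = e^{-2σr²}` and
the coefficients `a_{s,k}` do not depend on `B`; the leading one, `e^{-r²} w'(r)^s`, does not vanish
for `r ≠ 0`. Testing `D^s φ_τ(y)` on the unit radial vector gives
`‖D^s φ_τ(y)‖ ≥ κ (a |B|^s - C)` on the shell `1 ≤ ‖y‖ ≤ 2`, and integrating over a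
ball inside the shell gives the bound, since `κ |B|^s = |λ|^s κ^{1+2σs} (τ/ε)^s`.
The integral is a genuine one (and not Lean's junk value `0`) because every derivative of `P_B`
decays like `e^{-u}` on `[0, ∞)`, so `D^s φ_τ` is bounded by a polynomial times a Gaussian.
-/

open Finset Complex MeasureTheory
open scoped ContDiff Nat

/-- The coefficient of `c ^ k` in `e^{-c w} (d/dx)^n (E e^{c w})`. -/
noncomputable def expMulCoeff (E w : ℝ → ℝ) : ℕ → ℕ → ℝ → ℝ
  | 0, 0 => E
  | 0, _ + 1 => 0
  | n + 1, 0 => deriv (expMulCoeff E w n 0)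
  | n + 1, k + 1 => deriv (expMulCoeff E w n (k + 1)) + deriv w * expMulCoeff E w n k

namespace expMulCoeff

variable {E w : ℝ → ℝ}

theorem contDiff (hE : ContDiff ℝ ∞ E) (hw : ContDiff ℝ ∞ w) :
    ∀ n k, ContDiff ℝ ∞ (expMulCoeff E w n k)
  | 0, 0 => hE
  | 0, _ + 1 => contDiff_const
  | n + 1, 0 => (contDiff hE hw n 0).iterate_deriv 1
  | n + 1, k + 1 => ((contDiff hE hw n (k + 1)).iterate_deriv 1).add
      ((hw.iterate_deriv 1).mul (contDiff hE hw n k))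

theorem eq_zero_of_lt : ∀ {n k : ℕ}, n < k → expMulCoeff E w n k = 0
  | 0, _ + 1, _ => rfl
  | n + 1, k + 1, h => by
    simp [expMulCoeff, eq_zero_of_lt (Nat.lt_of_succ_lt_succ h),
      eq_zero_of_lt (Nat.lt_of_succ_lt h)]

theorem self : ∀ n, expMulCoeff E w n n = E * deriv w ^ n
  | 0 => by simp [expMulCoeff]
  | n + 1 => by
    simp only [expMulCoeff, eq_zero_of_lt (Nat.lt_succ_self n), self n]
    ring_nf
    simp

theorem sum_pow_mul_succ (c : ℂ) (n : ℕ) (x : ℝ) :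
    ∑ k ∈ range (n + 2), c ^ k * (expMulCoeff E w (n + 1) k x : ℂ) =
      ∑ k ∈ range (n + 1), c ^ k * ((deriv (expMulCoeff E w n k) x : ℝ) : ℂ) +
        c * ((deriv w x : ℝ) : ℂ) * ∑ k ∈ range (n + 1), c ^ k * (expMulCoeff E w n k x : ℂ) := by
  have hderiv_top : deriv (expMulCoeff E w n (n + 1)) x = 0 := by
    simp [eq_zero_of_lt (Nat.lt_succ_self n)]
  rw [← add_zero (∑ k ∈ range (n + 1), _), ← mul_zero (c ^ (n + 1)), ← ofReal_zero, ← hderiv_top,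
    ← sum_range_succ, sum_range_succ' _ (n + 1), sum_range_succ' _ (n + 1), mul_sum]
  simp only [expMulCoeff, Pi.add_apply, Pi.mul_apply, ofReal_add, ofReal_mul, mul_add,
    sum_add_distrib]
  ring_nf

theorem iteratedDeriv_ofReal_mul_cexp (hE : ContDiff ℝ ∞ E) (hw : ContDiff ℝ ∞ w) (c : ℂ) :
    ∀ (n : ℕ) (x : ℝ), iteratedDeriv n (fun x => (E x : ℂ) * cexp (c * w x)) x =
      cexp (c * w x) * ∑ k ∈ range (n + 1), c ^ k * (expMulCoeff E w n k x : ℂ)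
  | 0, x => by simp [expMulCoeff, mul_comm]
  | n + 1, x => by
    have hasDerivAt_ofReal {f : ℝ → ℝ} (hf : ContDiff ℝ ∞ f) (y : ℝ) :
        HasDerivAt (fun y => (f y : ℂ)) ((deriv f y : ℝ) : ℂ) y :=
      (hf.differentiable (by simp)).differentiableAt.hasDerivAt.ofReal_comp
    have hexp : HasDerivAt (fun y => cexp (c * w y)) (cexp (c * w x) * (c * ((deriv w x : ℝ) : ℂ))) x :=
      ((hasDerivAt_ofReal hw x).const_mul c).cexp
    have hsum : HasDerivAt (fun y => ∑ k ∈ range (n + 1), c ^ k * (expMulCoeff E w n k y : ℂ))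
        (∑ k ∈ range (n + 1), c ^ k * ((deriv (expMulCoeff E w n k) x : ℝ) : ℂ)) x :=
      HasDerivAt.fun_sum fun k _ => (hasDerivAt_ofReal (contDiff hE hw n k) x).const_mul _
    rw [iteratedDeriv_succ, funext (iteratedDeriv_ofReal_mul_cexp hE hw c n),
      (hexp.fun_mul hsum).deriv, sum_pow_mul_succ]
    ring

end expMulCoeff

theorem deriv_const_mul_exp_mul (α μ : ℝ) :
    deriv (fun u => α * Real.exp (μ * u)) = fun u => α * μ * Real.exp (μ * u) := by
  ext u
  have h := (((hasDerivAt_id u).const_mul μ).exp).const_mul α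
  simpa [mul_comm, mul_left_comm, mul_assoc] using h.deriv

theorem exists_expMulCoeff_exp_eq (β γ : ℝ) : ∀ n k, ∃ α : ℝ,
    expMulCoeff (fun u => Real.exp (β * u)) (fun u => Real.exp (γ * u)) n k =
      fun u => α * Real.exp ((β + k * γ) * u)
  | 0, 0 => ⟨1, by simp [expMulCoeff]⟩
  | 0, _ + 1 => ⟨0, funext fun u => by simp [expMulCoeff]⟩
  | n + 1, 0 => by
    obtain ⟨α, hα⟩ := exists_expMulCoeff_exp_eq β γ n 0
    simp only [Nat.cast_zero, zero_mul, add_zero] at hα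
    exact ⟨α * β, by simp only [expMulCoeff, hα, deriv_const_mul_exp_mul]; simp⟩
  | n + 1, k + 1 => by
    obtain ⟨α₁, hα₁⟩ := exists_expMulCoeff_exp_eq β γ n (k + 1)
    obtain ⟨α₀, hα₀⟩ := exists_expMulCoeff_exp_eq β γ n k
    refine ⟨α₁ * (β + (k + 1 : ℕ) * γ) + γ * α₀, ?_⟩
    have hw : deriv (fun u => Real.exp (γ * u)) = fun u => 1 * γ * Real.exp (γ * u) := by
      simpa using deriv_const_mul_exp_mul 1 γ
    ext u
    simp only [expMulCoeff, hα₁, hα₀, hw, deriv_const_mul_exp_mul, Pi.add_apply, Pi.mul_apply]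
    rw [show (β + ((k + 1 : ℕ) : ℝ) * γ) * u = γ * u + (β + k * γ) * u by push_cast; ring,
      Real.exp_add]
    ring

@[fun_prop]
theorem contDiff_ofReal {n : WithTop ℕ∞} : ContDiff ℝ n fun x : ℝ => (x : ℂ) :=
  ofRealCLM.contDiff

theorem norm_cexp_neg_I_mul_ofReal (B r : ℝ) : ‖cexp (-I * B * r)‖ = 1 := by
  rw [Complex.norm_exp]
  simp

theorem norm_neg_I_mul_ofReal_pow (B : ℝ) (k : ℕ) : ‖(-I * B) ^ k‖ = |B| ^ k := by
  simp

theorem exists_mul_pow_le_mul_pow_succ_add (m : ℝ) {ε : ℝ} (hε : 0 < ε) (s : ℕ) :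
    ∃ C, ∀ x, 0 ≤ x → m * x ^ s ≤ ε * x ^ (s + 1) + C := by
  refine ⟨|m| * (|m| / ε) ^ s, fun x hx => ?_⟩
  have hm : m * x ^ s ≤ |m| * x ^ s := by gcongr; exact le_abs_self m
  rcases le_or_gt x (|m| / ε) with hxR | hRx
  · calc m * x ^ s ≤ |m| * (|m| / ε) ^ s := hm.trans (by gcongr)
      _ ≤ _ := le_add_of_nonneg_left (by positivity)
  · have hmx : |m| ≤ ε * x := ((div_lt_iff₀' hε).mp hRx).le
    calc m * x ^ s ≤ |m| * x ^ s := hm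
      _ ≤ ε * x * x ^ s := by gcongr
      _ = ε * x ^ (s + 1) := by ring
      _ ≤ _ := le_add_of_nonneg_right (by positivity)

theorem exists_sum_mul_pow_le (M : ℕ → ℝ) :
    ∀ s : ℕ, ∀ ε > (0 : ℝ), ∃ C, ∀ x, 0 ≤ x → ∑ k ∈ range s, M k * x ^ k ≤ ε * x ^ s + C
  | 0, ε, hε => ⟨0, fun x _ => by simpa using hε.le⟩
  | s + 1, ε, hε => by
    obtain ⟨C₁, hC₁⟩ := exists_sum_mul_pow_le M s 1 one_pos
    obtain ⟨C₂, hC₂⟩ := exists_mul_pow_le_mul_pow_succ_add (1 + M s) hε s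
    refine ⟨C₁ + C₂, fun x hx => ?_⟩
    rw [sum_range_succ]
    linarith [hC₁ x hx, hC₂ x hx]

theorem exists_norm_iteratedDeriv_ofReal_mul_cexp_ge {E w : ℝ → ℝ} (hE : ContDiff ℝ ∞ E)
    (hw : ContDiff ℝ ∞ w) {K : Set ℝ} (hK : IsCompact K) (s : ℕ) {a : ℝ} (ha : 0 < a)
    (hEw : ∀ x ∈ K, a ≤ |E x * deriv w x ^ s|) :
    ∃ C, ∀ B : ℝ, ∀ x ∈ K,
      a / 2 * |B| ^ s - C ≤ ‖iteratedDeriv s (fun x => (E x : ℂ) * cexp (-I * B * w x)) x‖ := by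
  have hbound k : ∃ M, ∀ x ∈ K, ‖expMulCoeff E w s k x‖ ≤ M :=
    hK.exists_bound_of_continuousOn (expMulCoeff.contDiff hE hw s k).continuous.continuousOn
  choose M hM using hbound
  obtain ⟨C, hC⟩ := exists_sum_mul_pow_le M s (a / 2) (half_pos ha)
  refine ⟨C, fun B x hx => ?_⟩
  rw [expMulCoeff.iteratedDeriv_ofReal_mul_cexp hE hw, norm_mul, norm_cexp_neg_I_mul_ofReal,
    one_mul, sum_range_succ]
  have hleading : a * |B| ^ s ≤ ‖(-I * B) ^ s * (expMulCoeff E w s s x : ℂ)‖ := by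
    rw [norm_mul, norm_neg_I_mul_ofReal_pow, Complex.norm_real, expMulCoeff.self, mul_comm]
    gcongr
    exact hEw x hx
  have hlower : ‖∑ k ∈ range s, (-I * B) ^ k * (expMulCoeff E w s k x : ℂ)‖ ≤
      ∑ k ∈ range s, M k * |B| ^ k := by
    refine (norm_sum_le _ _).trans (sum_le_sum fun k _ => ?_)
    rw [norm_mul, norm_neg_I_mul_ofReal_pow, Complex.norm_real, mul_comm]
    gcongr
    exact hM k x hx
  linarith [hC |B| (abs_nonneg B), norm_le_add_norm_add'
    (∑ k ∈ range s, (-I * B) ^ k * (expMulCoeff E w s k x : ℂ))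
    ((-I * B) ^ s * (expMulCoeff E w s s x : ℂ))]

noncomputable def gaussianPhaseProfile (σ B u : ℝ) : ℂ :=
  (Real.exp (-u) : ℂ) * cexp (-I * B * Real.exp (-(2 * σ) * u))

theorem contDiff_gaussianPhaseProfile (σ B : ℝ) : ContDiff ℝ ∞ (gaussianPhaseProfile σ B) := by
  unfold gaussianPhaseProfile
  fun_prop

theorem ofReal_mul_cexp_eq_smul_gaussianPhaseProfile (κ σ lam t u : ℝ) :
    ((κ * Real.exp (-u) : ℝ) : ℂ) *
        cexp (-I * lam * t * ((κ ^ (2 * σ) * Real.exp (-u) ^ (2 * σ) : ℝ) : ℂ)) =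
      κ • gaussianPhaseProfile σ (lam * t * κ ^ (2 * σ)) u := by
  rw [← Real.exp_mul, gaussianPhaseProfile, Complex.real_smul]
  push_cast
  ring_nf

theorem exists_norm_iteratedDeriv_gaussianPhaseProfile_le {σ : ℝ} (hσ : 0 ≤ σ) (B : ℝ) (n : ℕ) :
    ∃ K, ∀ u, 0 ≤ u → ‖iteratedDeriv n (gaussianPhaseProfile σ B) u‖ ≤ K * Real.exp (-u) := by
  choose α hα using exists_expMulCoeff_exp_eq (-1) (-(2 * σ)) n
  simp only [neg_one_mul] at hα
  refine ⟨∑ k ∈ range (n + 1), |B| ^ k * |α k|, fun u hu => ?_⟩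
  unfold gaussianPhaseProfile
  rw [expMulCoeff.iteratedDeriv_ofReal_mul_cexp (E := fun u => Real.exp (-u))
      (w := fun u => Real.exp (-(2 * σ) * u)) (by fun_prop) (by fun_prop), norm_mul,
    norm_cexp_neg_I_mul_ofReal, one_mul, sum_mul]
  refine (norm_sum_le _ _).trans (sum_le_sum fun k _ => ?_)
  have hdecay : Real.exp ((-1 + k * -(2 * σ)) * u) ≤ Real.exp (-u) :=
    Real.exp_le_exp.mpr (by nlinarith [mul_nonneg (mul_nonneg (Nat.cast_nonneg k) hσ) hu])
  rw [hα, norm_mul, norm_neg_I_mul_ofReal_pow, Complex.norm_real, Real.norm_eq_abs, abs_mul,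
    Real.abs_exp, mul_assoc]
  gcongr

section Radial

variable {V F : Type*} [NormedAddCommGroup V] [InnerProductSpace ℝ V] [NormedAddCommGroup F]
  [NormedSpace ℝ F]

variable (V) in
theorem exists_norm_iteratedFDeriv_comp_norm_sq_le (n : ℕ) :
    ∃ (k : ℕ) (C : ℝ), 0 ≤ C ∧ ∀ g : ℝ → F, ContDiff ℝ ∞ g → ∀ x : V,
      ‖iteratedFDeriv ℝ n (fun z => g (‖z‖ ^ 2)) x‖ ≤
        C * (1 + ‖x‖) ^ k * ∑ i ∈ range (n + 1), ‖iteratedDeriv i g (‖x‖ ^ 2)‖ := by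
  obtain ⟨k, C₁, hC₁, hq⟩ := (Function.hasTemperateGrowth_norm_sq V).norm_iteratedFDeriv_le_uniform n
  refine ⟨k * n, n ! * (1 + C₁) ^ n, by positivity, fun g hg x => ?_⟩
  have hD : ∀ i, 1 ≤ i → i ≤ n →
      ‖iteratedFDeriv ℝ i (fun z : V => ‖z‖ ^ 2) x‖ ≤ ((1 + C₁) * (1 + ‖x‖) ^ k) ^ i := by
    intro i hi hin
    calc _ ≤ C₁ * (1 + ‖x‖) ^ k := hq i hin x
      _ ≤ (1 + C₁) * (1 + ‖x‖) ^ k := by gcongr; linarith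
      _ ≤ _ := le_self_pow₀ (one_le_mul_of_one_le_of_one_le (by linarith)
          (one_le_pow₀ (by linarith [norm_nonneg x]))) (by omega)
  have hC : ∀ i, i ≤ n → ‖iteratedFDeriv ℝ i g (‖x‖ ^ 2)‖ ≤
      ∑ i ∈ range (n + 1), ‖iteratedDeriv i g (‖x‖ ^ 2)‖ := fun i hi => by
    rw [norm_iteratedFDeriv_eq_norm_iteratedDeriv]
    exact single_le_sum (f := fun i => ‖iteratedDeriv i g (‖x‖ ^ 2)‖) (fun _ _ => norm_nonneg _)
      (mem_range.mpr (by omega))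
  calc _ ≤ _ := norm_iteratedFDeriv_comp_le hg (contDiff_norm_sq ℝ) (mod_cast le_top) x hC hD
    _ = _ := by rw [mul_pow, ← pow_mul]; ring

theorem norm_iteratedDeriv_comp_smul_le {f : V → F} (hf : ContDiff ℝ ∞ f) (v : V) (n : ℕ)
    (t : ℝ) :
    ‖iteratedDeriv n (fun s : ℝ => f (s • v)) t‖ ≤ ‖iteratedFDeriv ℝ n f (t • v)‖ * ‖v‖ ^ n := by
  let L : ℝ →L[ℝ] V := ContinuousLinearMap.toSpanSingleton ℝ v
  have hL : (fun s : ℝ => f (s • v)) = f ∘ L := rfl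
  rw [iteratedDeriv_eq_iteratedFDeriv, hL, L.iteratedFDeriv_comp_right hf t (mod_cast le_top),
    ContinuousMultilinearMap.compContinuousLinearMap_apply]
  refine ((iteratedFDeriv ℝ n f (L t)).le_opNorm _).trans_eq ?_
  simp [L]

theorem norm_iteratedDeriv_comp_sq_le {g : ℝ → F} (hg : ContDiff ℝ ∞ g) (n : ℕ) {y : V}
    (hy : y ≠ 0) :
    ‖iteratedDeriv n (fun r => g (r ^ 2)) ‖y‖‖ ≤ ‖iteratedFDeriv ℝ n (fun z => g (‖z‖ ^ 2)) y‖ := by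
  set v := ‖y‖⁻¹ • y
  have hv : ‖v‖ = 1 := norm_smul_inv_norm hy
  have hline : (fun r : ℝ => g (r ^ 2)) = fun r => g (‖r • v‖ ^ 2) := by
    ext r
    rw [norm_smul, hv, mul_one, Real.norm_eq_abs, sq_abs]
  have hyv : ‖y‖ • v = y := by
    rw [smul_inv_smul₀ (norm_ne_zero_iff.mpr hy)]
  have h := norm_iteratedDeriv_comp_smul_le (f := fun z : V => g (‖z‖ ^ 2))
    (hg.comp (contDiff_norm_sq ℝ)) v n ‖y‖
  rwa [← hline, hv, one_pow, mul_one, hyv] at h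

end Radial

theorem one_add_pow_mul_exp_neg_sq_le (m : ℕ) {r : ℝ} (hr : 0 ≤ r) :
    (1 + r) ^ m * Real.exp (-r ^ 2) ≤ m ! * Real.exp 2 := by
  have hpow : (1 + r) ^ m ≤ m ! * Real.exp (1 + r) := by
    have := Real.pow_div_factorial_le_exp (1 + r) (by positivity) m
    rwa [div_le_iff₀ (by positivity), mul_comm] at this
  calc (1 + r) ^ m * Real.exp (-r ^ 2) ≤ m ! * Real.exp (1 + r) * Real.exp (-r ^ 2) := by gcongr
    _ = m ! * Real.exp (1 + r - r ^ 2) := by rw [mul_assoc, ← Real.exp_add]; ring_nf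
    _ ≤ m ! * Real.exp 2 := by gcongr; nlinarith [sq_nonneg (r - 1 / 2)]

section Integrability

variable {V : Type*} [NormedAddCommGroup V] [InnerProductSpace ℝ V] [FiniteDimensional ℝ V]
  [MeasurableSpace V] [BorelSpace V]

theorem integrable_exp_neg_norm_sq : Integrable fun v : V => Real.exp (-‖v‖ ^ 2) := by
  refine (GaussianFourier.integrable_cexp_neg_mul_sq_norm_add (V := V) (b := 1) (by simp) 0 0).norm
    |>.congr (ae_of_all _ fun v => ?_)
  simp [Complex.norm_exp, ← Complex.ofReal_pow]

theorem integrable_sq_norm_iteratedFDeriv_gaussianPhaseProfile {σ : ℝ} (hσ : 0 ≤ σ) (B : ℝ)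
    (n : ℕ) : Integrable fun y : V =>
      ‖iteratedFDeriv ℝ n (fun z => gaussianPhaseProfile σ B (‖z‖ ^ 2)) y‖ ^ 2 := by
  obtain ⟨k, C, hC₀, hC⟩ := exists_norm_iteratedFDeriv_comp_norm_sq_le V (F := ℂ) n
  choose K hK using exists_norm_iteratedDeriv_gaussianPhaseProfile_le hσ B
  set A := C * ∑ i ∈ range (n + 1), K i
  have hbound (y : V) : ‖iteratedFDeriv ℝ n (fun z => gaussianPhaseProfile σ B (‖z‖ ^ 2)) y‖ ≤
      A * ((1 + ‖y‖) ^ k * Real.exp (-‖y‖ ^ 2)) := by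
    have hsum : ∑ i ∈ range (n + 1), ‖iteratedDeriv i (gaussianPhaseProfile σ B) (‖y‖ ^ 2)‖ ≤
        (∑ i ∈ range (n + 1), K i) * Real.exp (-‖y‖ ^ 2) := by
      rw [sum_mul]
      exact sum_le_sum fun i _ => hK i _ (by positivity)
    calc _ ≤ _ := hC _ (contDiff_gaussianPhaseProfile σ B) y
      _ ≤ C * (1 + ‖y‖) ^ k * ((∑ i ∈ range (n + 1), K i) * Real.exp (-‖y‖ ^ 2)) := by gcongr
      _ = _ := by ring
  have hcont : Continuous fun y : V =>
      ‖iteratedFDeriv ℝ n (fun z => gaussianPhaseProfile σ B (‖z‖ ^ 2)) y‖ ^ 2 :=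
    (((contDiff_gaussianPhaseProfile σ B).comp (contDiff_norm_sq ℝ)).continuous_iteratedFDeriv
      (mod_cast le_top)).norm.pow 2
  refine ((integrable_exp_neg_norm_sq (V := V)).const_mul (A ^ 2 * ((2 * k) ! * Real.exp 2))).mono'
    hcont.aestronglyMeasurable (ae_of_all _ fun y => ?_)
  rw [Real.norm_eq_abs, abs_of_nonneg (by positivity)]
  calc _ ≤ (A * ((1 + ‖y‖) ^ k * Real.exp (-‖y‖ ^ 2))) ^ 2 := by gcongr; exact hbound y
    _ = A ^ 2 * ((1 + ‖y‖) ^ (2 * k) * Real.exp (-‖y‖ ^ 2)) * Real.exp (-‖y‖ ^ 2) := by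
      rw [mul_comm 2 k, pow_mul]; ring
    _ ≤ _ := by gcongr A ^ 2 * ?_ * _; exact one_add_pow_mul_exp_neg_sq_le _ (norm_nonneg y)

end Integrability

section LowerBound

variable {V : Type*} [NormedAddCommGroup V] [InnerProductSpace ℝ V]

theorem exists_norm_iteratedFDeriv_gaussianPhaseProfile_ge {σ : ℝ} (hσ : 0 < σ) (s : ℕ) :
    ∃ a > 0, ∃ C > 0, ∀ B : ℝ, ∀ y : V, ‖y‖ ∈ Set.Icc (1 : ℝ) 2 →
      a * |B| ^ s - C ≤ ‖iteratedFDeriv ℝ s (fun z => gaussianPhaseProfile σ B (‖z‖ ^ 2)) y‖ := by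
  set E : ℝ → ℝ := fun r => Real.exp (-r ^ 2)
  set w : ℝ → ℝ := fun r => Real.exp (-(2 * σ) * r ^ 2)
  have hE : ContDiff ℝ ∞ E := by fun_prop
  have hw : ContDiff ℝ ∞ w := by fun_prop
  have hw' (r : ℝ) : deriv w r = w r * (-(2 * σ) * (2 * r)) := by
    rw [(((hasDerivAt_pow 2 r).const_mul (-(2 * σ))).exp).deriv]
    simp only [w]
    ring
  have hpos : ∀ r ∈ Set.Icc (1 : ℝ) 2, 0 < |E r * deriv w r ^ s| := fun r hr => by
    rw [hw']
    have : -(2 * σ) * (2 * r) ≠ 0 := (mul_neg_of_neg_of_pos (by linarith) (by linarith [hr.1])).ne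
    positivity
  obtain ⟨a, ha, haE⟩ := isCompact_Icc.exists_forall_le'
    ((hE.continuous.mul ((hw.continuous_deriv (by simp)).pow s)).abs.continuousOn) hpos
  obtain ⟨C, hC⟩ := exists_norm_iteratedDeriv_ofReal_mul_cexp_ge hE hw isCompact_Icc s ha haE
  refine ⟨a / 2, half_pos ha, max C 1, by positivity, fun B y hy => ?_⟩
  have hy0 : y ≠ 0 := norm_pos_iff.mp (by linarith [hy.1])
  calc a / 2 * |B| ^ s - max C 1 ≤ a / 2 * |B| ^ s - C := by gcongr; exact le_max_left C 1
    _ ≤ _ := hC B ‖y‖ hy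
    _ ≤ _ := norm_iteratedDeriv_comp_sq_le (contDiff_gaussianPhaseProfile σ B) s hy0

end LowerBound

theorem norm_iteratedFDeriv_ofReal_mul_cexp_eq {V : Type*} [NormedAddCommGroup V]
    [InnerProductSpace ℝ V] {κ : ℝ} (hκ : 0 ≤ κ) (σ lam t : ℝ) (n : ℕ) (y : V) :
    ‖iteratedFDeriv ℝ n (fun z : V => ((κ * Real.exp (-‖z‖ ^ 2) : ℝ) : ℂ) *
        cexp (-I * lam * t * ((κ ^ (2 * σ) * Real.exp (-‖z‖ ^ 2) ^ (2 * σ) : ℝ) : ℂ))) y‖ =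
      κ * ‖iteratedFDeriv ℝ n
        (fun z => gaussianPhaseProfile σ (lam * t * κ ^ (2 * σ)) (‖z‖ ^ 2)) y‖ := by
  have hf : ContDiff ℝ ∞ fun z : V => gaussianPhaseProfile σ (lam * t * κ ^ (2 * σ)) (‖z‖ ^ 2) :=
    (contDiff_gaussianPhaseProfile _ _).comp (contDiff_norm_sq ℝ)
  simp_rw [ofReal_mul_cexp_eq_smul_gaussianPhaseProfile]
  rw [iteratedFDeriv_const_smul_apply' (hf.of_le (mod_cast le_top)).contDiffAt, norm_smul,
    Real.norm_of_nonneg hκ]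

theorem Real.rpow_one_add_mul_natCast {x : ℝ} (hx : 0 < x) (y : ℝ) (n : ℕ) :
    x ^ (1 + y * n) = x * (x ^ y) ^ n := by
  rw [Real.rpow_add hx, Real.rpow_one, Real.rpow_mul_natCast hx.le]

theorem mul_sqrt_measureReal_le_sqrt_integral_sq {X : Type*} [MeasurableSpace X]
    {μ : Measure X} {f : X → ℝ} {S : Set X} (hS : MeasurableSet S) (hμS : μ S ≠ ⊤)
    (hf : Integrable (fun x => f x ^ 2) μ) {m : ℝ} (hm : ∀ x ∈ S, m ≤ f x) :
    m * √(μ.real S) ≤ √(∫ x, f x ^ 2 ∂μ) := by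
  rcases le_or_gt m 0 with hm0 | hm0
  · exact (mul_nonpos_of_nonpos_of_nonneg hm0 (Real.sqrt_nonneg _)).trans (Real.sqrt_nonneg _)
  have hsq : ∀ x ∈ S, m ^ 2 ≤ f x ^ 2 := fun x hx => pow_le_pow_left₀ hm0.le (hm x hx) 2
  have hint : μ.real S * m ^ 2 ≤ ∫ x, f x ^ 2 ∂μ :=
    (setIntegral_ge_of_const_le hS hμS hsq hf.integrableOn).trans
      (setIntegral_le_integral hf (ae_of_all _ fun x => sq_nonneg _))
  calc m * √(μ.real S) = √(μ.real S * m ^ 2) := by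
        rw [Real.sqrt_mul measureReal_nonneg, Real.sqrt_sq hm0.le, mul_comm]
    _ ≤ _ := Real.sqrt_le_sqrt hint

theorem exists_measurableSet_norm_mem_Icc (V : Type*) [NormedAddCommGroup V] [NormedSpace ℝ V]
    [Nontrivial V] [MeasurableSpace V] [OpensMeasurableSpace V] (μ : Measure V)
    [μ.IsAddHaarMeasure] [ProperSpace V] :
    ∃ S : Set V, MeasurableSet S ∧ μ S ≠ ⊤ ∧ 0 < μ.real S ∧ ∀ y ∈ S, ‖y‖ ∈ Set.Icc (1 : ℝ) 2 := by
  obtain ⟨y₀, hy₀⟩ := exists_norm_eq V (by norm_num : (0 : ℝ) ≤ 3 / 2)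
  refine ⟨Metric.closedBall y₀ (1 / 2), measurableSet_closedBall, measure_closedBall_lt_top.ne,
    ENNReal.toReal_pos (Metric.measure_closedBall_pos μ y₀ (by norm_num)).ne'
      measure_closedBall_lt_top.ne, fun y hy => ?_⟩
  have := abs_norm_sub_norm_le y y₀
  rw [← dist_eq_norm, hy₀] at this
  have := this.trans (Metric.mem_closedBall.mp hy)
  constructor <;> linarith [abs_le.mp this]

theorem gaussian_ode_solution_lower_bound_general (d : ℕ) (hd : 1 ≤ d) (σ lam : ℝ)
    (hσ : 0 < σ) (hlam : lam ≠ 0) (s : ℕ) :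
    ∃ c > (0 : ℝ), ∃ C > (0 : ℝ), ∀ κ ∈ Set.Ioc (0 : ℝ) 1, ∀ ε > (0 : ℝ), ∀ τ ≥ (0 : ℝ),
      c * κ ^ (1 + 2 * σ * (s : ℝ)) * (τ / ε) ^ s - C * κ
      ≤ Real.sqrt (∫ y : EuclideanSpace ℝ (Fin d),
          ‖iteratedFDeriv ℝ s (fun z : EuclideanSpace ℝ (Fin d) =>
            ((κ * Real.exp (-‖z‖ ^ 2) : ℝ) : ℂ) *
              Complex.exp (-Complex.I * (lam : ℂ) * ((τ / ε : ℝ) : ℂ)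
                * ((κ ^ (2 * σ) * Real.exp (-‖z‖ ^ 2) ^ (2 * σ) : ℝ) : ℂ))) y‖ ^ 2) := by
  have : Nonempty (Fin d) := ⟨⟨0, hd⟩⟩
  obtain ⟨a, ha, C, hC, hlow⟩ :=
    exists_norm_iteratedFDeriv_gaussianPhaseProfile_ge (V := EuclideanSpace ℝ (Fin d)) hσ s
  obtain ⟨S, hS, hSfin, hSpos, hSnorm⟩ :=
    exists_measurableSet_norm_mem_Icc (EuclideanSpace ℝ (Fin d)) volume
  refine ⟨√(volume.real S) * a * |lam| ^ s, by positivity, √(volume.real S) * C, by positivity,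
    fun κ hκ ε hε τ hτ => ?_⟩
  set B := lam * (τ / ε) * κ ^ (2 * σ)
  simp_rw [norm_iteratedFDeriv_ofReal_mul_cexp_eq hκ.1.le]
  calc _ = κ * (a * |B| ^ s - C) * √(volume.real S) := by
        rw [Real.rpow_one_add_mul_natCast hκ.1, abs_mul, abs_mul,
          abs_of_nonneg (div_nonneg hτ hε.le), abs_of_nonneg (Real.rpow_nonneg hκ.1.le _)]
        ring
    _ ≤ _ := mul_sqrt_measureReal_le_sqrt_integral_sq hS hSfin
      (((integrable_sq_norm_iteratedFDeriv_gaussianPhaseProfile hσ.le B s).const_mul (κ ^ 2)).congr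
        (ae_of_all _ fun y => by ring))
      fun y hy => mul_le_mul_of_nonneg_left (hlow B y (hSnorm y hy)) hκ.1.le

theorem gaussian_ode_solution_lower_bound (d : ℕ) (hd : 1 ≤ d) (σ lam : ℝ)
    (hσ : 0 < σ) (hlam : lam ≠ 0) (s : ℕ) (hs : 1 ≤ s) :
    ∃ c > (0 : ℝ), ∃ C > (0 : ℝ), ∀ κ ∈ Set.Ioc (0 : ℝ) 1, ∀ ε > (0 : ℝ), ∀ τ ≥ (0 : ℝ),
      c * κ ^ (1 + 2 * σ * (s : ℝ)) * (τ / ε) ^ s - C * κ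
      ≤ Real.sqrt (∫ y : EuclideanSpace ℝ (Fin d),
          ‖iteratedFDeriv ℝ s (fun z : EuclideanSpace ℝ (Fin d) =>
            ((κ * Real.exp (-‖z‖ ^ 2) : ℝ) : ℂ) *
              Complex.exp (-Complex.I * (lam : ℂ) * ((τ / ε : ℝ) : ℂ)
                * ((κ ^ (2 * σ) * Real.exp (-‖z‖ ^ 2) ^ (2 * σ) : ℝ) : ℂ))) y‖ ^ 2) :=
  gaussian_ode_solution_lower_bound_general d hd σ lam hσ hlam s
end
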